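/- Assume σ > 0 and let k > 0 be real. Then there exist R > 0 and sequences (p_n)_{n≥0}, (p̂_n)_{n≥0} of real numbers such that both series ∑_{n=0}^∞ p_n q^{−n/2} and ∑_{n=0}^∞ p̂_n q^{−n/2} converge absolutely for every q ∈ ℂ with |q| > R, and for every real q > R one has k^{−ζ_{N+1}(q)} = k^{−√(2q)/σ} · ∑_{n=0}^∞ p_n q^{−n/2} and k^{ζ̂_{N̂+1}(q)} = k^{√(2q)/σ} · ∑_{n=0}^∞ p̂_n q^{−n/2}. -/

import Mathlib

/-- The Laplace exponent of a hyperexponential Lévy process, extended to a rational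
function on `ℂ`. -/
noncomputable def psi (σ A : ℝ) (N Nh : ℕ) (aa ρ ah ρh : ℕ → ℝ) (z : ℂ) : ℂ :=
  (σ : ℂ) ^ 2 * z ^ 2 / 2 + (A : ℂ) * z
    + z * ∑ ℓ ∈ Finset.Icc 1 N, (aa ℓ : ℂ) / ((ρ ℓ : ℂ) - z)
    - z * ∑ ℓ ∈ Finset.Icc 1 Nh, (ah ℓ : ℂ) / ((ρh ℓ : ℂ) + z)

/-!
Put `t = 1/ζ`. The equation `ψ(ζ) = q` becomes `u(t) = q t²`, where `u(t) = t² ψ(1/t)` is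
analytic at `0` with `u(0) = σ²/2`. Hence `w = q^{-1/2}` equals `t / √u(t)`, a function of `t`
with derivative `√2/σ ≠ 0` at `0`; inverting it analytically gives `t = θ(w)`, so
`ζ = 1/θ(w) = (√2/σ)/w + g(w) = √(2q)/σ + g(w)` with `g` analytic at `0`. Therefore
`k^{-ζ} = k^{-√(2q)/σ} exp(-g(w) log k)`, and the last factor is a power series in `q^{-1/2}`.
This needs `t → 0`, i.e. `ζ_{N+1}(q) → ∞`, which holds because `ψ(x) ≤ σ²x²/2 + a x` for
`x > ρ_N`. The root `ζ̂_{N̂+1}` is the same root for `z ↦ ψ(-z)`, again a hyperexponential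
exponent.
-/

open Complex Filter Topology

section LocalInverse

variable {𝕜 : Type*} [NontriviallyNormedField 𝕜]

theorem AnalyticAt.dslope {f : 𝕜 → 𝕜} {a : 𝕜} (hf : AnalyticAt 𝕜 f a) :
    AnalyticAt 𝕜 (dslope f a) a :=
  let ⟨_, hp⟩ := hf
  ⟨_, hp.has_fpower_series_dslope_fslope⟩

theorem inv_eq_inv_deriv_div_add_dslope {θ : 𝕜 → 𝕜} (h0 : θ 0 = 0) {w : 𝕜} (hw : w ≠ 0) :
    (θ w)⁻¹ = (deriv θ 0)⁻¹ / w + dslope (dslope θ 0)⁻¹ 0 w := by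
  simp only [dslope_of_ne _ hw, slope_def_field, Pi.inv_apply, dslope_same, h0, sub_zero]
  field_simp
  ring

theorem AnalyticAt.exists_localInverse [CompleteSpace 𝕜] {φ : 𝕜 → 𝕜} {φ' a : 𝕜}
    (hφ : AnalyticAt 𝕜 φ a) (hd : HasDerivAt φ φ' a) (h' : φ' ≠ 0) :
    ∃ θ : 𝕜 → 𝕜, AnalyticAt 𝕜 θ (φ a) ∧ HasDerivAt θ φ'⁻¹ (φ a) ∧
      ∀ᶠ t in 𝓝 a, θ (φ t) = t := by
  have hs : HasStrictDerivAt φ φ' a := by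
    simpa [hd.deriv] using hφ.hasStrictDerivAt
  have he := hs.hasStrictFDerivAt_equiv h'
  refine ⟨hs.localInverse φ φ' a h', ?_, hs.to_localInverse h' |>.hasDerivAt,
    hs.eventually_left_inverse h'⟩
  exact (he.toOpenPartialHomeomorph φ).analyticAt_symm' he.mem_toOpenPartialHomeomorph_source hφ
    he.hasFDerivAt.fderiv

theorem AnalyticAt.exists_hasSum_pow {f : 𝕜 → 𝕜} (hf : AnalyticAt 𝕜 f 0) :
    ∃ s > (0 : ℝ), ∃ c : ℕ → 𝕜, Summable (fun n => ‖c n‖ * s ^ n) ∧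
      ∀ w : 𝕜, ‖w‖ < s → HasSum (fun n => c n * w ^ n) (f w) := by
  obtain ⟨P, r, hP⟩ := hf
  obtain ⟨s, hs0, hsr⟩ := ENNReal.lt_iff_exists_nnreal_btwn.mp hP.r_pos
  refine ⟨s, by exact_mod_cast ENNReal.coe_pos.mp hs0, P.coeff, ?_, fun w hw => ?_⟩
  · simpa only [P.norm_apply_eq_norm_coef] using P.summable_norm_mul_pow (hsr.trans_le hP.r_le)
  · have hw' : w ∈ Metric.eball (0 : 𝕜) r := by
      refine lt_trans ?_ hsr
      rw [edist_zero_right, ← ofReal_norm, ← ENNReal.ofReal_coe_nnreal]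
      exact (ENNReal.ofReal_lt_ofReal_iff_of_nonneg (norm_nonneg w)).2 hw
    simpa [mul_comm] using hP.hasSum hw'

end LocalInverse

theorem Complex.ofReal_cpow_neg_half {a : ℝ} (ha : 0 ≤ a) :
    (a : ℂ) ^ (-(1 / 2 : ℂ)) = ((√a)⁻¹ : ℝ) := by
  rw [Real.sqrt_eq_rpow, ← Real.rpow_neg ha, ofReal_cpow ha]
  push_cast
  rfl

theorem Real.rpow_neg_div_two_natCast {y : ℝ} (hy : 0 ≤ y) (n : ℕ) :
    y ^ (-(n : ℝ) / 2) = (√y)⁻¹ ^ n := by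
  rw [neg_div, Real.rpow_neg hy, div_eq_mul_one_div, mul_comm, Real.rpow_mul hy,
    ← Real.sqrt_eq_rpow, Real.rpow_natCast, inv_pow]

theorem Complex.norm_cpow_neg_div_two_natCast {q : ℂ} (hq : q ≠ 0) (n : ℕ) :
    ‖q ^ (-(n : ℂ) / 2)‖ = (√‖q‖)⁻¹ ^ n := by
  rw [norm_cpow_of_ne_zero hq, ← Real.rpow_neg_div_two_natCast (norm_nonneg q)]
  simp

theorem inv_sqrt_lt_of_inv_sq_lt {s y : ℝ} (hs : 0 < s) (hy : s⁻¹ ^ 2 < y) : (√y)⁻¹ < s := by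
  rw [inv_lt_comm₀ (Real.sqrt_pos.2 ((by positivity : 0 ≤ s⁻¹ ^ 2).trans_lt hy)) hs]
  exact Real.lt_sqrt (by positivity) |>.2 hy

theorem AnalyticAt.exists_re_series_inv_sqrt {f : ℂ → ℂ} (hf : AnalyticAt ℂ f 0) :
    ∃ R > (0 : ℝ), ∃ p : ℕ → ℝ,
      (∀ q : ℂ, R < ‖q‖ → Summable (fun n : ℕ => ‖(p n : ℂ) * q ^ (-(n : ℂ) / 2)‖)) ∧
      ∀ q : ℝ, R < q →
        HasSum (fun n : ℕ => p n * q ^ (-(n : ℝ) / 2)) (f ((√q)⁻¹ : ℝ)).re := by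
  obtain ⟨s, hs, c, hc, hcf⟩ := hf.exists_hasSum_pow
  refine ⟨s⁻¹ ^ 2, by positivity, fun n => (c n).re, fun q hq => ?_, fun q hq => ?_⟩
  · have hq0 : q ≠ 0 := norm_pos_iff.1 ((by positivity : (0 : ℝ) < s⁻¹ ^ 2).trans hq)
    refine hc.of_nonneg_of_le (fun n => norm_nonneg _) fun n => ?_
    rw [norm_mul, norm_real, Complex.norm_cpow_neg_div_two_natCast hq0]
    gcongr
    · exact abs_re_le_norm (c n)
    · exact (inv_sqrt_lt_of_inv_sq_lt hs hq).le
  · have hw : ‖(((√q)⁻¹ : ℝ) : ℂ)‖ < s := by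
      rw [norm_real, Real.norm_of_nonneg (by positivity)]
      exact inv_sqrt_lt_of_inv_sq_lt hs hq
    have hq0 : 0 ≤ q := (by positivity : (0 : ℝ) ≤ s⁻¹ ^ 2).trans hq.le
    simpa [Real.rpow_neg_div_two_natCast hq0, ← ofReal_pow] using hasSum_re (hcf _ hw)

section SqrtChart

variable {u : ℂ → ℂ} {c : ℝ}

/-- When `u t = t² ψ(1/t)`, this is `1 / √ψ(1/t)`, so it sends `1/x` to `q^{-1/2}` whenever
`ψ x = q`. -/
noncomputable def sqrtChart (u : ℂ → ℂ) (t : ℂ) : ℂ :=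
  t * u t ^ (-(1 / 2 : ℂ))

theorem analyticAt_cpow_neg_half (hu : AnalyticAt ℂ u 0) (hc : 0 < c) (hu0 : u 0 = c) :
    AnalyticAt ℂ (fun t => u t ^ (-(1 / 2 : ℂ))) 0 :=
  hu.cpow analyticAt_const (hu0 ▸ ofReal_mem_slitPlane.2 hc)

theorem analyticAt_sqrtChart (hu : AnalyticAt ℂ u 0) (hc : 0 < c) (hu0 : u 0 = c) :
    AnalyticAt ℂ (sqrtChart u) 0 :=
  analyticAt_id.mul (analyticAt_cpow_neg_half hu hc hu0)

theorem hasDerivAt_sqrtChart (hu : AnalyticAt ℂ u 0) (hc : 0 < c) (hu0 : u 0 = c) :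
    HasDerivAt (sqrtChart u) ((√c)⁻¹ : ℝ) 0 := by
  refine ((hasDerivAt_id' (0 : ℂ)).mul
    (analyticAt_cpow_neg_half hu hc hu0).differentiableAt.hasDerivAt).congr_deriv ?_
  rw [hu0, Complex.ofReal_cpow_neg_half hc.le]
  ring

theorem sqrtChart_inv_of_eq {ψ : ℂ → ℂ} (huψ : ∀ t ≠ 0, u t = t ^ 2 * ψ t⁻¹) {x q : ℝ}
    (hx : 0 < x) (hq : 0 ≤ q) (hψ : ψ x = q) : sqrtChart u (x⁻¹ : ℝ) = ((√q)⁻¹ : ℝ) := by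
  have hux : u (x⁻¹ : ℝ) = ((x⁻¹ ^ 2 * q : ℝ) : ℂ) := by
    rw [huψ _ (by exact_mod_cast (inv_pos.2 hx).ne'), ofReal_inv, inv_inv, hψ]
    push_cast
    ring
  have hx' : (x : ℂ) ≠ 0 := by exact_mod_cast hx.ne'
  simp only [sqrtChart, hux, Complex.ofReal_cpow_neg_half (by positivity : 0 ≤ x⁻¹ ^ 2 * q),
    Real.sqrt_mul (sq_nonneg _), Real.sqrt_sq (inv_pos.2 hx).le]
  push_cast
  field_simp

end SqrtChart

theorem exists_root_expansion_of_tendsto {ψ u : ℂ → ℂ} {c : ℝ} (hu : AnalyticAt ℂ u 0)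
    (hc : 0 < c) (hu0 : u 0 = c) (huψ : ∀ t ≠ 0, u t = t ^ 2 * ψ t⁻¹) {ζ : ℝ → ℝ}
    (hζ : Tendsto ζ atTop atTop) (hψζ : ∀ᶠ q in atTop, ψ (ζ q) = q) :
    ∃ g : ℂ → ℂ, AnalyticAt ℂ g 0 ∧
      ∀ᶠ q in atTop, (ζ q : ℂ) = ((√q / √c : ℝ) : ℂ) + g ((√q)⁻¹ : ℝ) := by
  have hc' : (((√c)⁻¹ : ℝ) : ℂ) ≠ 0 := by exact_mod_cast (inv_pos.2 (Real.sqrt_pos.2 hc)).ne'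
  obtain ⟨θ, hθ, hθ', hθφ⟩ :=
    (analyticAt_sqrtChart hu hc hu0).exists_localInverse (hasDerivAt_sqrtChart hu hc hu0) hc'
  have hφ0 : sqrtChart u 0 = 0 := zero_mul _
  rw [hφ0] at hθ hθ'
  have hθ0 : θ 0 = 0 := by simpa [hφ0] using hθφ.self_of_nhds
  refine ⟨dslope (dslope θ 0)⁻¹ 0, (hθ.dslope.inv ?_).dslope, ?_⟩
  · rw [dslope_same, hθ'.deriv]
    exact inv_ne_zero hc'
  have hinv : Tendsto (fun q => (((ζ q)⁻¹ : ℝ) : ℂ)) atTop (𝓝 0) :=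
    (continuous_ofReal.tendsto' 0 0 ofReal_zero).comp (tendsto_inv_atTop_zero.comp hζ)
  filter_upwards [hinv.eventually hθφ, hψζ, hζ.eventually_gt_atTop 0, eventually_gt_atTop 0]
    with q hθq hψq hζq hq
  have hθw : θ ((√q)⁻¹ : ℝ) = ((ζ q)⁻¹ : ℝ) := by
    rwa [← sqrtChart_inv_of_eq huψ hζq hq.le hψq]
  have h := inv_eq_inv_deriv_div_add_dslope hθ0 (w := ((√q)⁻¹ : ℝ))
    (by exact_mod_cast (inv_pos.2 (Real.sqrt_pos.2 hq)).ne')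
  rw [hθw, hθ'.deriv] at h
  push_cast at h ⊢
  simp only [inv_inv, div_inv_eq_mul] at h
  rw [h, inv_mul_eq_div]

theorem exists_rpow_series_of_eventually_eq {k : ℝ} (hk : 0 < k) {ζ s : ℝ → ℝ} {g : ℂ → ℂ}
    (hg : AnalyticAt ℂ g 0) (h : ∀ᶠ q in atTop, (ζ q : ℂ) = s q + g ((√q)⁻¹ : ℝ)) :
    ∃ R > (0 : ℝ), ∃ p : ℕ → ℝ,
      (∀ q : ℂ, R < ‖q‖ → Summable (fun n : ℕ => ‖(p n : ℂ) * q ^ (-(n : ℂ) / 2)‖)) ∧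
      ∀ q : ℝ, R < q → k ^ ζ q = k ^ s q * ∑' n : ℕ, p n * q ^ (-(n : ℝ) / 2) := by
  have hf : AnalyticAt ℂ (fun w => cexp (Real.log k * g w)) 0 := (analyticAt_const.mul hg).cexp
  obtain ⟨R₁, hR₁, p, hp, hpf⟩ := hf.exists_re_series_inv_sqrt
  obtain ⟨R₂, hR₂⟩ := eventually_atTop.1 h
  refine ⟨max R₁ R₂, lt_max_of_lt_left hR₁, p, fun q hq => hp q ((le_max_left _ _).trans_lt hq),
    fun q hq => ?_⟩
  have hgq : g ((√q)⁻¹ : ℝ) = ((ζ q - s q : ℝ) : ℂ) := by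
    rw [ofReal_sub, hR₂ q ((le_max_right _ _).trans hq.le), add_sub_cancel_left]
  rw [(hpf q ((le_max_left _ _).trans_lt hq)).tsum_eq, hgq, ← ofReal_mul, ← ofReal_exp, ofReal_re,
    ← Real.rpow_def_of_pos hk, ← Real.rpow_add hk, add_sub_cancel]

theorem strictMonoOn_Iic_of_lt {ρ : ℕ → ℝ} {N : ℕ} (hmono : ∀ i j, i < j → j ≤ N → ρ i < ρ j) :
    StrictMonoOn ρ (Set.Iic N) :=
  fun i _ j hj hij => hmono i j hij hj

theorem pos_of_lt_of_strictMonoOn {ρ : ℕ → ℝ} {N : ℕ} (hρ0 : ρ 0 = 0)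
    (hmono : StrictMonoOn ρ (Set.Iic N)) {x : ℝ} (hx : ρ N < x) : 0 < x :=
  hρ0 ▸ (hmono.monotoneOn (Set.mem_Iic.2 (Nat.zero_le N)) (Set.mem_Iic.2 le_rfl)
    (Nat.zero_le N)).trans_lt hx

section Hyperexponential

variable (σ A : ℝ) (N Nh : ℕ) (aa ρ ah ρh : ℕ → ℝ)

/-- `t² ψ(1/t)`, written so that it is visibly analytic at `t = 0`. -/
noncomputable def psiInfty (t : ℂ) : ℂ :=
  (σ : ℂ) ^ 2 / 2 + (A : ℂ) * t
    + ∑ ℓ ∈ Finset.Icc 1 N, (aa ℓ : ℂ) * t ^ 2 / ((ρ ℓ : ℂ) * t - 1)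
    - ∑ ℓ ∈ Finset.Icc 1 Nh, (ah ℓ : ℂ) * t ^ 2 / ((ρh ℓ : ℂ) * t + 1)

theorem psiInfty_zero : psiInfty σ A N Nh aa ρ ah ρh 0 = ((σ ^ 2 / 2 : ℝ) : ℂ) := by
  simp [psiInfty]

theorem analyticAt_psiInfty : AnalyticAt ℂ (psiInfty σ A N Nh aa ρ ah ρh) 0 := by
  refine ((analyticAt_const.add (analyticAt_const.mul analyticAt_id)).add
    (Finset.analyticAt_fun_sum _ fun ℓ _ => ?_)).sub (Finset.analyticAt_fun_sum _ fun ℓ _ => ?_)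
  · exact (analyticAt_const.mul (analyticAt_id.pow 2)).div
      ((analyticAt_const.mul analyticAt_id).sub analyticAt_const) (by simp)
  · exact (analyticAt_const.mul (analyticAt_id.pow 2)).div
      ((analyticAt_const.mul analyticAt_id).add analyticAt_const) (by simp)

noncomputable def psiReal (x : ℝ) : ℝ :=
  σ ^ 2 * x ^ 2 / 2 + A * x + x * ∑ ℓ ∈ Finset.Icc 1 N, aa ℓ / (ρ ℓ - x)
    - x * ∑ ℓ ∈ Finset.Icc 1 Nh, ah ℓ / (ρh ℓ + x)

theorem psi_ofReal (x : ℝ) :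
    psi σ A N Nh aa ρ ah ρh x = psiReal σ A N Nh aa ρ ah ρh x := by
  simp only [psi, psiReal]
  push_cast
  ring

theorem psi_neg (z : ℂ) : psi σ A N Nh aa ρ ah ρh (-z) = psi σ (-A) Nh N ah ρh aa ρ z := by
  simp only [psi, sub_neg_eq_add, ← sub_eq_add_neg]
  push_cast
  ring

variable {N Nh aa ρ ah ρh}

theorem psiReal_le (hpos : ∀ ℓ ∈ Finset.Icc 1 N, 0 < aa ℓ)
    (hposh : ∀ ℓ ∈ Finset.Icc 1 Nh, 0 < ah ℓ) (hρ0 : ρ 0 = 0) (hρh0 : ρh 0 = 0)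
    (hmono : StrictMonoOn ρ (Set.Iic N)) (hmonoh : StrictMonoOn ρh (Set.Iic Nh))
    {x : ℝ} (hx : ρ N < x) :
    psiReal σ A N Nh aa ρ ah ρh x ≤ σ ^ 2 * x ^ 2 / 2 + A * x := by
  have hx0 := pos_of_lt_of_strictMonoOn hρ0 hmono hx
  have hS : ∑ ℓ ∈ Finset.Icc 1 N, aa ℓ / (ρ ℓ - x) ≤ 0 := by
    refine Finset.sum_nonpos fun ℓ hℓ => div_nonpos_of_nonneg_of_nonpos (hpos ℓ hℓ).le ?_
    have hℓN := (Finset.mem_Icc.1 hℓ).2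
    linarith [hmono.monotoneOn (Set.mem_Iic.2 hℓN) (Set.mem_Iic.2 le_rfl) hℓN]
  have hSh : 0 ≤ ∑ ℓ ∈ Finset.Icc 1 Nh, ah ℓ / (ρh ℓ + x) := by
    refine Finset.sum_nonneg fun ℓ hℓ => div_nonneg (hposh ℓ hℓ).le ?_
    have hℓN := (Finset.mem_Icc.1 hℓ).2
    linarith [hmonoh.monotoneOn (Set.mem_Iic.2 (Nat.zero_le Nh)) (Set.mem_Iic.2 hℓN)
      (Nat.zero_le ℓ)]
  unfold psiReal
  nlinarith [mul_nonpos_of_nonneg_of_nonpos hx0.le hS, mul_nonneg hx0.le hSh]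

variable {σ A}

theorem psiInfty_eq {t : ℂ} (ht : t ≠ 0) :
    psiInfty σ A N Nh aa ρ ah ρh t = t ^ 2 * psi σ A N Nh aa ρ ah ρh t⁻¹ := by
  have key : ∀ b c d : ℂ, b * t ^ 2 / (c * t - d) = t ^ 2 * (t⁻¹ * (b / (c - d * t⁻¹))) := by
    intro b c d
    rw [show c * t - d = t * (c - d * t⁻¹) by field_simp]
    by_cases hc : c - d * t⁻¹ = 0
    · simp [hc]
    · field_simp
  have key' : ∀ b c : ℂ, b * t ^ 2 / (c * t + 1) = t ^ 2 * (t⁻¹ * (b / (c + t⁻¹))) := by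
    simpa using fun b c => key b c (-1)
  simp only [psiInfty, psi, fun b c => key b c 1, one_mul, key', ← Finset.mul_sum]
  field_simp

theorem tendsto_atTop_of_psi_eq (hpos : ∀ ℓ ∈ Finset.Icc 1 N, 0 < aa ℓ)
    (hposh : ∀ ℓ ∈ Finset.Icc 1 Nh, 0 < ah ℓ) (hρ0 : ρ 0 = 0) (hρh0 : ρh 0 = 0)
    (hmono : StrictMonoOn ρ (Set.Iic N)) (hmonoh : StrictMonoOn ρh (Set.Iic Nh))
    {ζ : ℝ → ℝ} (hζ : ∀ q : ℝ, 0 < q → ρ N < ζ q ∧ psi σ A N Nh aa ρ ah ρh (ζ q) = q) :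
    Tendsto ζ atTop atTop := by
  refine tendsto_atTop.2 fun C => ?_
  set C' := max C 0
  filter_upwards [eventually_gt_atTop (max (σ ^ 2 * C' ^ 2 / 2 + |A| * C') 0)] with q hq
  obtain ⟨hρq, hψq⟩ := hζ q ((le_max_right _ _).trans_lt hq)
  rw [psi_ofReal] at hψq
  have hq' := (le_max_left _ _).trans_lt hq
  have hle := psiReal_le σ A hpos hposh hρ0 hρh0 hmono hmonoh hρq
  have hx0 := pos_of_lt_of_strictMonoOn hρ0 hmono hρq
  by_contra! hlt
  have hxC : ζ q ≤ C' := hlt.le.trans (le_max_left _ _)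
  have : A * ζ q ≤ |A| * C' := (mul_le_mul_of_nonneg_right (le_abs_self A) hx0.le).trans
    (mul_le_mul_of_nonneg_left hxC (abs_nonneg A))
  have : σ ^ 2 * ζ q ^ 2 / 2 ≤ σ ^ 2 * C' ^ 2 / 2 := by gcongr
  linarith [show psiReal σ A N Nh aa ρ ah ρh (ζ q) = q by exact_mod_cast hψq]

theorem exists_psi_root_expansion (hσ : 0 < σ) (hpos : ∀ ℓ ∈ Finset.Icc 1 N, 0 < aa ℓ)
    (hposh : ∀ ℓ ∈ Finset.Icc 1 Nh, 0 < ah ℓ) (hρ0 : ρ 0 = 0) (hρh0 : ρh 0 = 0)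
    (hmono : StrictMonoOn ρ (Set.Iic N)) (hmonoh : StrictMonoOn ρh (Set.Iic Nh))
    {ζ : ℝ → ℝ} (hζ : ∀ q : ℝ, 0 < q → ρ N < ζ q ∧ psi σ A N Nh aa ρ ah ρh (ζ q) = q) :
    ∃ g : ℂ → ℂ, AnalyticAt ℂ g 0 ∧
      ∀ᶠ q in atTop, (ζ q : ℂ) = ((√(2 * q) / σ : ℝ) : ℂ) + g ((√q)⁻¹ : ℝ) := by
  obtain ⟨g, hg, hζg⟩ := exists_root_expansion_of_tendsto (analyticAt_psiInfty ..)
    (by positivity : 0 < σ ^ 2 / 2) (psiInfty_zero ..) (fun _ => psiInfty_eq)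
    (tendsto_atTop_of_psi_eq hpos hposh hρ0 hρh0 hmono hmonoh hζ)
    ((eventually_gt_atTop 0).mono fun q hq => (hζ q hq).2)
  refine ⟨g, hg, hζg.mono fun q hq => ?_⟩
  rw [hq, Real.sqrt_div (sq_nonneg σ), Real.sqrt_sq hσ.le, Real.sqrt_mul zero_le_two]
  congr 2
  field_simp

end Hyperexponential

/-- For `σ > 0` and `k > 0`:
`k^{-ζ_{N+1}(q)} = k^{-√(2q)/σ} ∑_{n≥0} p_n q^{-n/2}` and
`k^{ζ̂_{N̂+1}(q)} = k^{√(2q)/σ} ∑_{n≥0} p̂_n q^{-n/2}`, the series converging absolutely for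
every `q ∈ ℂ` with `|q| > R`. -/
theorem exponential_extra_roots_series_sigma_pos
    (σ A : ℝ) (N Nh : ℕ) (aa ρ ah ρh : ℕ → ℝ)
    (hσ : 0 < σ)
    (hpos : ∀ ℓ ∈ Finset.Icc 1 N, 0 < aa ℓ)
    (hposh : ∀ ℓ ∈ Finset.Icc 1 Nh, 0 < ah ℓ)
    (hρ0 : ρ 0 = 0) (hρh0 : ρh 0 = 0)
    (hmono : ∀ i j, i < j → j ≤ N → ρ i < ρ j)
    (hmonoh : ∀ i j, i < j → j ≤ Nh → ρh i < ρh j)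
    (k : ℝ) (hk : 0 < k)
    (ζM ζhM : ℝ → ℝ)
    (hζM : ∀ q : ℝ, 0 < q → ρ N < ζM q ∧ psi σ A N Nh aa ρ ah ρh (ζM q : ℂ) = (q : ℂ))
    (hζhM : ∀ q : ℝ, 0 < q → ρh Nh < ζhM q ∧
        psi σ A N Nh aa ρ ah ρh (-(ζhM q : ℝ) : ℂ) = (q : ℂ)) :
    ∃ R > (0 : ℝ), ∃ p ph : ℕ → ℝ,
      (∀ q : ℂ, R < ‖q‖ →
        Summable (fun n : ℕ => ‖(p n : ℂ) * q ^ (-(n : ℂ) / 2)‖) ∧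
        Summable (fun n : ℕ => ‖(ph n : ℂ) * q ^ (-(n : ℂ) / 2)‖)) ∧
      (∀ q : ℝ, R < q →
        k ^ (-(ζM q)) = k ^ (-(Real.sqrt (2 * q)) / σ) * ∑' n : ℕ, p n * q ^ (-(n : ℝ) / 2) ∧
        k ^ (ζhM q) = k ^ (Real.sqrt (2 * q) / σ) * ∑' n : ℕ, ph n * q ^ (-(n : ℝ) / 2)) := by
  have hmono' := strictMonoOn_Iic_of_lt hmono
  have hmonoh' := strictMonoOn_Iic_of_lt hmonoh
  obtain ⟨g, hg, hζg⟩ := exists_psi_root_expansion hσ hpos hposh hρ0 hρh0 hmono' hmonoh' hζM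
  obtain ⟨ĝ, hĝ, hζĝ⟩ := exists_psi_root_expansion (A := -A) hσ hposh hpos hρh0 hρ0 hmonoh'
    hmono' fun q hq => ⟨(hζhM q hq).1, by rw [← psi_neg]; exact (hζhM q hq).2⟩
  obtain ⟨R₁, hR₁, p, hp, hpζ⟩ := exists_rpow_series_of_eventually_eq hk hg.neg
    (ζ := fun q => -ζM q) (s := fun q => -√(2 * q) / σ)
    (hζg.mono fun q hq => by push_cast [hq, Pi.neg_apply]; ring)
  obtain ⟨R₂, -, ph, hph, hphζ⟩ := exists_rpow_series_of_eventually_eq hk hĝ hζĝ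
  refine ⟨max R₁ R₂, lt_max_of_lt_left hR₁, p, ph, fun q hq => ?_, fun q hq => ?_⟩
  · exact ⟨hp q ((le_max_left _ _).trans_lt hq), hph q ((le_max_right _ _).trans_lt hq)⟩
  · exact ⟨hpζ q ((le_max_left _ _).trans_lt hq), hphζ q ((le_max_right _ _).trans_lt hq)⟩
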